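/- Let {A_i}_{i=1}^3 be nonempty closed convex subsets of a uniformly convex Banach space (X, ‖·‖), and T : A₁∪A₂∪A₃ → A₁∪A₂∪A₃ a 3-cyclic summing contraction. Then there exist unique points z_i ∈ A_i (i = 1,2,3) such that: for any x ∈ A_i the sequence {T^{3n}x} converges to z_i; ‖z₁−z₂‖ = dist(A₁,A₂), ‖z₂−z₃‖ = dist(A₂,A₃), ‖z₃−z₁‖ = dist(A₃,A₁); and Tz₁ = z₂, Tz₂ = z₃, Tz₃ = z₁. -/
import Mathlib


open Filter

/-- dist(U,V) = inf {‖u−v‖ : u ∈ U, v ∈ V} -/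
noncomputable def setDist {X : Type*} [NormedAddCommGroup X] (U V : Set X) : ℝ :=
  sInf (Set.image2 (fun u v => ‖u - v‖) U V)

lemma setDist_nonneg {X : Type*} [NormedAddCommGroup X] (U V : Set X) : 0 ≤ setDist U V :=
  Real.sInf_nonneg (by rintro r ⟨u, hu, v, hv, rfl⟩; exact norm_nonneg _)

lemma setDist_le {X : Type*} [NormedAddCommGroup X] {U V : Set X} {u v : X}
    (hu : u ∈ U) (hv : v ∈ V) : setDist U V ≤ ‖u - v‖ :=
  csInf_le ⟨0, by rintro r ⟨u, hu, v, hv, rfl⟩; exact norm_nonneg _⟩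
    (Set.mem_image2_of_mem hu hv)

/-- Key uniform convexity lemma: points of `A` that are within `γ` of realizing the
distance to a common point of `B` are `ε`-close to each other. -/
lemma uc_gamma {X : Type*} [NormedAddCommGroup X] [NormedSpace ℝ X] [UniformConvexSpace X]
    (A B : Set X) (hA : Convex ℝ A) {ε : ℝ} (hε : 0 < ε) :
    ∃ γ > 0, ∀ x ∈ A, ∀ z ∈ A, ∀ y ∈ B,
      ‖x - y‖ ≤ setDist A B + γ → ‖z - y‖ ≤ setDist A B + γ → ‖x - z‖ ≤ ε := by
  set d := setDist A B with hd
  have hd0 : 0 ≤ d := setDist_nonneg A B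
  rcases eq_or_lt_of_le hd0 with hd0' | hd0'
  · refine ⟨ε / 2, by positivity, fun x hx z hz y hy h1 h2 => ?_⟩
    have : x - z = (x - y) - (z - y) := by abel
    calc ‖x - z‖ = ‖(x - y) - (z - y)‖ := by rw [← this]
      _ ≤ ‖x - y‖ + ‖z - y‖ := norm_sub_le _ _
      _ ≤ ε := by rw [← hd0'] at h1 h2; linarith
  · obtain ⟨δ, hδ0, hδ⟩ := exists_forall_closed_ball_dist_add_le_two_mul_sub X
      (show (0:ℝ) < ε / 2 by positivity) d
    refine ⟨min (d / 2) (δ / 4), by positivity, fun x hx z hz y hy h1 h2 => ?_⟩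
    set γ := min (d / 2) (δ / 4) with hγ
    have hγ0 : 0 < γ := by positivity
    have hγd : γ ≤ d := le_trans (min_le_left _ _) (by linarith)
    have hγδ : γ ≤ δ / 4 := min_le_right _ _
    by_contra hcon
    push_neg at hcon
    -- rescale to radius d
    set c : ℝ := d / (d + γ) with hc
    have hdγ : 0 < d + γ := by linarith
    have hc0 : 0 < c := by positivity
    have hc1 : c ≤ 1 := by rw [hc, div_le_one hdγ]; linarith
    have hch : (1:ℝ)/2 ≤ c := by
      rw [hc, le_div_iff₀ hdγ]; linarith
    set u := x - y with hu
    set v := z - y with hv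
    have hnu : ‖c • u‖ ≤ d := by
      rw [norm_smul_of_nonneg hc0.le, hc, div_mul_eq_mul_div, div_le_iff₀ hdγ]
      nlinarith [norm_nonneg u]
    have hnv : ‖c • v‖ ≤ d := by
      rw [norm_smul_of_nonneg hc0.le, hc, div_mul_eq_mul_div, div_le_iff₀ hdγ]
      nlinarith [norm_nonneg v]
    have hsub : ε / 2 ≤ ‖c • u - c • v‖ := by
      rw [← smul_sub, norm_smul_of_nonneg hc0.le]
      have : u - v = x - z := by rw [hu, hv]; abel
      rw [this]
      nlinarith [hcon.le]
    have hsum := hδ hnu hnv hsub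
    rw [← smul_add, norm_smul_of_nonneg hc0.le] at hsum
    -- so ‖u + v‖ ≤ (2d - δ)/c ≤ (2d-δ)(d+γ)/d  ≤ 2(d+γ) - δ
    have hδd : δ ≤ 2 * d := by
      by_contra hh
      push_neg at hh
      nlinarith [mul_nonneg hc0.le (norm_nonneg (u + v))]
    have huv : ‖u + v‖ ≤ 2 * (d + γ) - δ := by
      have h1 : ‖u + v‖ * c ≤ 2 * d - δ := by linarith [hsum]
      have h2 : ‖u + v‖ ≤ (2 * d - δ) / c := by
        rw [le_div_iff₀ hc0]; linarith
      have h3 : (2 * d - δ) / c = (2 * d - δ) * (d + γ) / d := by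
        rw [hc]; field_simp
      rw [h3] at h2
      have h4 : (2 * d - δ) * (d + γ) / d ≤ 2 * (d + γ) - δ := by
        rw [div_le_iff₀ hd0']
        nlinarith
      linarith
    -- midpoint
    have hm : (2⁻¹:ℝ) • x + (2⁻¹:ℝ) • z ∈ A := hA hx hz (by norm_num) (by norm_num) (by norm_num)
    have hmd : d ≤ ‖(2⁻¹:ℝ) • x + (2⁻¹:ℝ) • z - y‖ := setDist_le hm hy
    have h2m : u + v = (2:ℝ) • ((2⁻¹:ℝ) • x + (2⁻¹:ℝ) • z - y) := by
      rw [hu, hv]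
      module
    rw [h2m, norm_smul_of_nonneg (by norm_num : (0:ℝ) ≤ 2)] at huv
    nlinarith

noncomputable def per {X : Type*} [NormedAddCommGroup X] (a b c : X) : ℝ :=
  ‖a - b‖ + ‖b - c‖ + ‖c - a‖

section Orbit

variable {X : Type*} [NormedAddCommGroup X]
  {A B C : Set X} {T : X → X} {k : ℝ}

lemma per_rot (a b c : X) : per a b c = per b c a := by simp only [per]; ring

lemma per_ge (hu : ∀ x ∈ A, T x ∈ B) {u v w : X}
    (h1 : u ∈ A) (h2 : v ∈ B) (h3 : w ∈ C) :
    setDist A B + setDist B C + setDist C A ≤ per u v w := by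
  have := setDist_le h1 h2
  have := setDist_le h2 h3
  have := setDist_le h3 h1
  simp only [per]; linarith

lemma per_tri (a a' b c : X) : per a b c ≤ per a' b c + 2 * ‖a - a'‖ := by
  have e1 : a - b = (a - a') + (a' - b) := by abel
  have e2 : c - a = (c - a') + (a' - a) := by abel
  have h1 : ‖a - b‖ ≤ ‖a - a'‖ + ‖a' - b‖ := by rw [e1]; exact norm_add_le _ _
  have h2 : ‖c - a‖ ≤ ‖c - a'‖ + ‖a' - a‖ := by rw [e2]; exact norm_add_le _ _
  rw [norm_sub_rev a' a] at h2
  simp only [per]; linarith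

variable (hTA : ∀ x ∈ A, T x ∈ B) (hTB : ∀ x ∈ B, T x ∈ C) (hTC : ∀ x ∈ C, T x ∈ A)
  (hk0 : 0 < k) (hk1 : k < 1)
  (hcontr : ∀ x₁ ∈ A, ∀ x₂ ∈ B, ∀ x₃ ∈ C,
    per (T x₁) (T x₂) (T x₃) ≤ k * per x₁ x₂ x₃ +
      (1 - k) * (setDist A B + setDist B C + setDist C A))

include hTA hTB hTC hk0 hk1 hcontr

lemma three_step {u v w : X} (h1 : u ∈ A) (h2 : v ∈ B) (h3 : w ∈ C) :
    T^[3] u ∈ A ∧ T^[3] v ∈ B ∧ T^[3] w ∈ C ∧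
    per (T^[3] u) (T^[3] v) (T^[3] w) ≤ k ^ 3 * per u v w +
      (1 - k ^ 3) * (setDist A B + setDist B C + setDist C A) := by
  set D := setDist A B + setDist B C + setDist C A with hD
  have hcontrB : ∀ x₁ ∈ B, ∀ x₂ ∈ C, ∀ x₃ ∈ A,
      per (T x₁) (T x₂) (T x₃) ≤ k * per x₁ x₂ x₃ + (1 - k) * D := by
    intro x₁ m₁ x₂ m₂ x₃ m₃
    have := hcontr x₃ m₃ x₁ m₁ x₂ m₂
    rw [per_rot (T x₃), per_rot x₃] at this
    exact this
  have hcontrC : ∀ x₁ ∈ C, ∀ x₂ ∈ A, ∀ x₃ ∈ B,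
      per (T x₁) (T x₂) (T x₃) ≤ k * per x₁ x₂ x₃ + (1 - k) * D := by
    intro x₁ m₁ x₂ m₂ x₃ m₃
    have := hcontr x₂ m₂ x₃ m₃ x₁ m₁
    rw [← per_rot (T x₁), ← per_rot x₁] at this
    exact this
  have s1 := hcontr u h1 v h2 w h3
  have s2 := hcontrB (T u) (hTA u h1) (T v) (hTB v h2) (T w) (hTC w h3)
  have s3 := hcontrC (T (T u)) (hTB _ (hTA u h1)) (T (T v)) (hTC _ (hTB v h2))
    (T (T w)) (hTA _ (hTC w h3))
  have e : ∀ y : X, T^[3] y = T (T (T y)) := by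
    intro y
    simp [Function.iterate_succ_apply]
  refine ⟨by rw [e]; exact hTC _ (hTB _ (hTA u h1)),
    by rw [e]; exact hTA _ (hTC _ (hTB v h2)),
    by rw [e]; exact hTB _ (hTA _ (hTC w h3)), ?_⟩
  rw [e, e, e]
  nlinarith [mul_le_mul_of_nonneg_left s1 hk0.le,
    mul_le_mul_of_nonneg_left s2 hk0.le, hk0.le, hk1.le, sq_nonneg k,
    mul_le_mul_of_nonneg_left (mul_le_mul_of_nonneg_left s1 hk0.le) hk0.le]

lemma orbit {u v w : X} (h1 : u ∈ A) (h2 : v ∈ B) (h3 : w ∈ C) (n : ℕ) :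
    T^[3*n] u ∈ A ∧ T^[3*n] v ∈ B ∧ T^[3*n] w ∈ C ∧
    per (T^[3*n] u) (T^[3*n] v) (T^[3*n] w) ≤
      (setDist A B + setDist B C + setDist C A) +
      k ^ (3*n) * (per u v w - (setDist A B + setDist B C + setDist C A)) := by
  set D := setDist A B + setDist B C + setDist C A with hD
  induction n with
  | zero =>
    refine ⟨by simpa using h1, by simpa using h2, by simpa using h3, ?_⟩
    simp only [Nat.mul_zero, Function.iterate_zero_apply, pow_zero, one_mul]
    linarith
  | succ n ih =>
    obtain ⟨m1, m2, m3, hper⟩ := ih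
    obtain ⟨m1', m2', m3', hper'⟩ := three_step hTA hTB hTC hk0 hk1 hcontr m1 m2 m3
    have e : ∀ y : X, T^[3*(n+1)] y = T^[3] (T^[3*n] y) := by
      intro y
      have : 3*(n+1) = 3 + 3*n := by ring
      rw [this, Function.iterate_add_apply]
    refine ⟨by rw [e]; exact m1', by rw [e]; exact m2', by rw [e]; exact m3', ?_⟩
    rw [e u, e v, e w]
    have hpow : k ^ (3*(n+1)) = k ^ 3 * k ^ (3*n) := by
      rw [← pow_add]; ring_nf
    rw [hpow, ← hD] at *
    have h5 := mul_le_mul_of_nonneg_left hper (pow_nonneg hk0.le 3)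
    nlinarith [h5, hper']

end Orbit

section Master

variable {X : Type*} [NormedAddCommGroup X] [NormedSpace ℝ X]
  [UniformConvexSpace X] [CompleteSpace X]
  {A B C : Set X} {T : X → X} {k : ℝ}

lemma master (hcA : IsClosed A) (hvA : Convex ℝ A)
    (hTA : ∀ x ∈ A, T x ∈ B) (hTB : ∀ x ∈ B, T x ∈ C) (hTC : ∀ x ∈ C, T x ∈ A)
    (hk0 : 0 < k) (hk1 : k < 1)
    (hcontr : ∀ x₁ ∈ A, ∀ x₂ ∈ B, ∀ x₃ ∈ C,
      per (T x₁) (T x₂) (T x₃) ≤ k * per x₁ x₂ x₃ +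
        (1 - k) * (setDist A B + setDist B C + setDist C A))
    {x₀ : X} (hx₀ : x₀ ∈ A) :
    ∃ z ∈ A, ∀ x ∈ A, Tendsto (fun n => T^[3 * n] x) atTop (nhds z) := by
  set D := setDist A B + setDist B C + setDist C A with hD
  set x : ℕ → X := fun n => T^[n] x₀ with hxdef
  have hxadd : ∀ a b : ℕ, x (a + b) = T^[a] (x b) := fun a b =>
    Function.iterate_add_apply T a b x₀
  have hx1B : x 1 ∈ B := hTA x₀ hx₀
  have hx2C : x 2 ∈ C := hTB _ hx1B
  have horb : ∀ u ∈ A, ∀ n : ℕ, T^[3*n] u ∈ A ∧ T^[3*n] (x 1) ∈ B ∧ T^[3*n] (x 2) ∈ C ∧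
      per (T^[3*n] u) (T^[3*n] (x 1)) (T^[3*n] (x 2)) ≤
        D + k ^ (3*n) * (per u (x 1) (x 2) - D) := by
    intro u hu n
    have := orbit hTA hTB hTC hk0 hk1 hcontr hu hx1B hx2C n
    rw [← hD] at this
    exact this
  have hxA : ∀ c : ℕ, x (3*c) ∈ A := fun c => (horb x₀ hx₀ c).1
  have hx3n1 : ∀ n : ℕ, x (3*n+1) = T^[3*n] (x 1) := fun n => hxadd (3*n) 1
  have hx3n2 : ∀ n : ℕ, x (3*n+2) = T^[3*n] (x 2) := fun n => hxadd (3*n) 2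
  have hx1B' : ∀ n : ℕ, x (3*n+1) ∈ B := fun n => by
    rw [hx3n1]; exact (horb x₀ hx₀ n).2.1
  have hx2C' : ∀ n : ℕ, x (3*n+2) ∈ C := fun n => by
    rw [hx3n2]; exact (horb x₀ hx₀ n).2.2.1
  have hk30 : (0:ℝ) ≤ k ^ 3 := pow_nonneg hk0.le 3
  have hk31 : k ^ 3 < 1 := pow_lt_one₀ hk0.le hk1 (by norm_num)
  -- boundedness of the orbit
  set P : ℕ → ℝ := fun m => per x₀ (x (3*m+1)) (x (3*m+2)) with hPdef
  set b : ℝ := (1 - k^3) * D + 2 * ‖x₀ - x 3‖ with hbdef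
  have hPstep : ∀ m, P (m+1) ≤ k^3 * P m + b := by
    intro m
    have h3s := (three_step hTA hTB hTC hk0 hk1 hcontr hx₀ (hx1B' m) (hx2C' m)).2.2.2
    rw [← hD] at h3s
    have e0 : T^[3] x₀ = x 3 := rfl
    have e1 : T^[3] (x (3*m+1)) = x (3*(m+1)+1) := by
      rw [← hxadd]; congr 1; ring
    have e2 : T^[3] (x (3*m+2)) = x (3*(m+1)+2) := by
      rw [← hxadd]; congr 1; ring
    rw [e0, e1, e2] at h3s
    have htri := per_tri x₀ (x 3) (x (3*(m+1)+1)) (x (3*(m+1)+2))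
    simp only [hPdef, hbdef]
    linarith
  set M0 : ℝ := max (P 0) (b / (1 - k^3)) with hM0def
  have hPbound : ∀ m, P m ≤ M0 := by
    intro m
    induction m with
    | zero => exact le_max_left _ _
    | succ m ih =>
      have hb : b ≤ (1 - k^3) * M0 := by
        have : b / (1 - k^3) ≤ M0 := le_max_right _ _
        rw [div_le_iff₀ (by linarith)] at this
        linarith
      calc P (m+1) ≤ k^3 * P m + b := hPstep m
        _ ≤ k^3 * M0 + (1 - k^3) * M0 := by nlinarith
        _ = M0 := by ring
  -- uniform bound on per (x (3c)) (x 1) (x 2)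
  have hperpos : ∀ a b c : X, 0 ≤ per a b c := fun a b c =>
    add_nonneg (add_nonneg (norm_nonneg _) (norm_nonneg _)) (norm_nonneg _)
  set E₀ : ℝ := max (per x₀ (x 1) (x 2) - D) 0 with hE0def
  have hkE : ∀ c : ℕ, ∀ E : ℝ, k ^ (3*c) * (per x₀ (x 1) (x 2) - D) ≤ E₀ := by
    intro c E
    rcases le_total (per x₀ (x 1) (x 2) - D) 0 with h | h
    · exact le_trans (mul_nonpos_of_nonneg_of_nonpos (pow_nonneg hk0.le _) h)
        (le_max_right _ _)
    · calc k ^ (3*c) * (per x₀ (x 1) (x 2) - D) ≤ 1 * (per x₀ (x 1) (x 2) - D) :=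
          mul_le_mul_of_nonneg_right (pow_le_one₀ hk0.le hk1.le) h
        _ = per x₀ (x 1) (x 2) - D := one_mul _
        _ ≤ E₀ := le_max_left _ _
  set M1 : ℝ := max (per x₀ (x 1) (x 2) + 2 * ((D + E₀) + M0) - D) 0 with hM1def
  have hM1 : ∀ c : ℕ, per (x (3*c)) (x 1) (x 2) - D ≤ M1 := by
    intro c
    have htri := per_tri (x (3*c)) x₀ (x 1) (x 2)
    have hnrm : ‖x (3*c) - x₀‖ ≤ (D + E₀) + M0 := by
      have h1 : ‖x (3*c) - x (3*c+1)‖ ≤ D + E₀ := by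
        have hp := (horb x₀ hx₀ c).2.2.2
        have hkE' := hkE c 0
        have e1 : T^[3*c] x₀ = x (3*c) := rfl
        rw [e1, ← hx3n1, ← hx3n2] at hp
        have h2 := norm_nonneg (x (3*c+1) - x (3*c+2))
        have h3 := norm_nonneg (x (3*c+2) - x (3*c))
        simp only [per] at hp hkE'
        linarith
      have h2 : ‖x (3*c+1) - x₀‖ ≤ M0 := by
        have := hPbound c
        simp only [hPdef, per] at this
        have h3 := norm_nonneg (x (3*c+1) - x (3*c+2))
        have h4 := norm_nonneg (x (3*c+2) - x₀)
        rw [norm_sub_rev]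
        linarith
      calc ‖x (3*c) - x₀‖ ≤ ‖x (3*c) - x (3*c+1)‖ + ‖x (3*c+1) - x₀‖ := by
            have e : x (3*c) - x₀ = (x (3*c) - x (3*c+1)) + (x (3*c+1) - x₀) := by abel
            rw [e]; exact norm_add_le _ _
        _ ≤ (D + E₀) + M0 := by linarith
    have : per (x (3*c)) (x 1) (x 2) - D ≤
        per x₀ (x 1) (x 2) + 2 * ((D + E₀) + M0) - D := by linarith
    exact le_trans this (le_max_left _ _)
  have hM1nn : (0:ℝ) ≤ M1 := le_max_right _ _
  -- key estimate (i)
  have hkey : ∀ n m : ℕ, n ≤ m →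
      ‖x (3*m) - x (3*n+1)‖ ≤ setDist A B + k ^ (3*n) * M1 := by
    intro n m hnm
    obtain ⟨c, rfl⟩ := le_iff_exists_add.1 hnm
    have e : x (3*(n+c)) = T^[3*n] (x (3*c)) := by
      rw [← hxadd]; congr 1; ring
    obtain ⟨ma, mb, mc, hp⟩ := horb (x (3*c)) (hxA c) n
    have hbd : per (T^[3*n] (x (3*c))) (T^[3*n] (x 1)) (T^[3*n] (x 2)) ≤ D + k ^ (3*n) * M1 := by
      have := mul_le_mul_of_nonneg_left (hM1 c) (pow_nonneg hk0.le (3*n))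
      linarith
    have h2 := setDist_le mb mc
    have h3 := setDist_le mc ma
    simp only [per] at hbd
    rw [e, hx3n1]
    simp only [hD] at hbd
    linarith
  -- key estimate (ii)
  have hkey2 : ∀ y ∈ A, ∀ n : ℕ, T^[3*n] y ∈ A ∧
      ‖T^[3*n] y - x (3*n+1)‖ ≤ setDist A B + k ^ (3*n) * max (per y (x 1) (x 2) - D) 0 := by
    intro y hy n
    obtain ⟨ma, mb, mc, hp⟩ := horb y hy n
    refine ⟨ma, ?_⟩
    have hbd : per (T^[3*n] y) (T^[3*n] (x 1)) (T^[3*n] (x 2)) ≤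
        D + k ^ (3*n) * max (per y (x 1) (x 2) - D) 0 := by
      have := mul_le_mul_of_nonneg_left (le_max_left (per y (x 1) (x 2) - D) 0)
        (pow_nonneg hk0.le (3*n))
      linarith
    have h2 := setDist_le mb mc
    have h3 := setDist_le mc ma
    rw [hx3n1]
    simp only [per] at hbd ⊢
    simp only [hD] at hbd
    linarith
  -- smallness of k^(3n) * M for any M
  have hsmall : ∀ M γ : ℝ, 0 < γ → ∃ N : ℕ, ∀ n ≥ N, k ^ (3*n) * M ≤ γ := by
    intro M γ hγ
    have h1 : Tendsto (fun n : ℕ => k ^ (3*n) * M) atTop (nhds 0) := by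
      have h2 : Tendsto (fun n : ℕ => (k^3) ^ n) atTop (nhds 0) :=
        tendsto_pow_atTop_nhds_zero_of_lt_one hk30 hk31
      have h3 := h2.mul_const M
      rw [zero_mul] at h3
      convert h3 using 2 with n
      rw [← pow_mul]
    have h4 := h1.eventually (gt_mem_nhds hγ)
    obtain ⟨N, hN⟩ := eventually_atTop.1 h4
    exact ⟨N, fun n hn => (hN n hn).le⟩
  -- Cauchy
  have hcauchy : CauchySeq (fun m => x (3*m)) := by
    rw [Metric.cauchySeq_iff']
    intro ε hε
    obtain ⟨γ, hγ0, hγ⟩ := uc_gamma A B hvA (show (0:ℝ) < ε/2 by positivity)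
    obtain ⟨N, hN⟩ := hsmall M1 γ hγ0
    refine ⟨N, fun m hm => ?_⟩
    rw [dist_eq_norm]
    have h1 : ‖x (3*m) - x (3*N+1)‖ ≤ setDist A B + γ :=
      le_trans (hkey N m hm) (by linarith [hN N le_rfl])
    have h2 : ‖x (3*N) - x (3*N+1)‖ ≤ setDist A B + γ :=
      le_trans (hkey N N le_rfl) (by linarith [hN N le_rfl])
    have := hγ (x (3*m)) (hxA m) (x (3*N)) (hxA N) (x (3*N+1)) (hx1B' N) h1 h2
    linarith
  obtain ⟨z, hz⟩ := cauchySeq_tendsto_of_complete hcauchy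
  have hzA : z ∈ A := hcA.mem_of_tendsto hz (Eventually.of_forall fun m => hxA m)
  refine ⟨z, hzA, fun y hy => ?_⟩
  rw [Metric.tendsto_atTop]
  intro ε hε
  obtain ⟨γ, hγ0, hγ⟩ := uc_gamma A B hvA (show (0:ℝ) < ε/3 by positivity)
  set My : ℝ := max (per y (x 1) (x 2) - D) 0 with hMydef
  obtain ⟨N1, hN1⟩ := hsmall (max M1 My) γ hγ0
  obtain ⟨N2, hN2⟩ := Metric.tendsto_atTop.1 hz (ε/3) (by positivity)
  refine ⟨max N1 N2, fun n hn => ?_⟩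
  have hn1 : N1 ≤ n := le_trans (le_max_left _ _) hn
  have hn2 : N2 ≤ n := le_trans (le_max_right _ _) hn
  have hknn := pow_nonneg hk0.le (3*n)
  have hbig := hN1 n hn1
  have hMyb : k ^ (3*n) * My ≤ γ :=
    le_trans (mul_le_mul_of_nonneg_left (le_max_right M1 My) hknn) hbig
  have hM1b : k ^ (3*n) * M1 ≤ γ :=
    le_trans (mul_le_mul_of_nonneg_left (le_max_left M1 My) hknn) hbig
  obtain ⟨hmemy, hy1⟩ := hkey2 y hy n
  have h1 : ‖T^[3*n] y - x (3*n+1)‖ ≤ setDist A B + γ := le_trans hy1 (by linarith)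
  have h2 : ‖x (3*n) - x (3*n+1)‖ ≤ setDist A B + γ :=
    le_trans (hkey n n le_rfl) (by linarith)
  have h3 := hγ (T^[3*n] y) hmemy (x (3*n)) (hxA n) (x (3*n+1)) (hx1B' n) h1 h2
  have h4 := hN2 n hn2
  calc dist (T^[3*n] y) z ≤ dist (T^[3*n] y) (x (3*n)) + dist (x (3*n)) z :=
        dist_triangle _ _ _
    _ ≤ ε/3 + dist (x (3*n)) z := by rw [dist_eq_norm]; linarith
    _ < ε := by linarith

end Master

section Tz

variable {X : Type*} [NormedAddCommGroup X] [NormedSpace ℝ X]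
  [UniformConvexSpace X]
  {A B C : Set X} {T : X → X} {k : ℝ}

lemma tz (hvB : Convex ℝ B)
    (hTA : ∀ x ∈ A, T x ∈ B) (hTB : ∀ x ∈ B, T x ∈ C) (hTC : ∀ x ∈ C, T x ∈ A)
    (hk0 : 0 < k) (hk1 : k < 1)
    (hcontr : ∀ x₁ ∈ A, ∀ x₂ ∈ B, ∀ x₃ ∈ C,
      per (T x₁) (T x₂) (T x₃) ≤ k * per x₁ x₂ x₃ +
        (1 - k) * (setDist A B + setDist B C + setDist C A))
    {z₁ z₂ z₃ : X} (hz₁ : z₁ ∈ A) (hz₂ : z₂ ∈ B) (hz₃ : z₃ ∈ C)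
    (hconvA : ∀ x ∈ A, Tendsto (fun n => T^[3 * n] x) atTop (nhds z₁))
    (hconvB : ∀ x ∈ B, Tendsto (fun n => T^[3 * n] x) atTop (nhds z₂))
    (hconvC : ∀ x ∈ C, Tendsto (fun n => T^[3 * n] x) atTop (nhds z₃))
    (h12 : ‖z₁ - z₂‖ = setDist A B) (h23 : ‖z₂ - z₃‖ = setDist B C)
    (h31 : ‖z₃ - z₁‖ = setDist C A) :
    T z₁ = z₂ := by
  set D := setDist A B + setDist B C + setDist C A with hD
  have hTz1 : T z₁ ∈ B := hTA z₁ hz₁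
  have hTz2 : T (T z₁) ∈ C := hTB _ hTz1
  have hTz3 : T (T (T z₁)) ∈ A := hTC _ hTz2
  have hcomm : ∀ (n : ℕ) (w : X), T (T^[3*n] w) = T^[3*n] (T w) := fun n w => by
    rw [← Function.iterate_succ_apply' T (3*n) w, Function.iterate_succ_apply]
  have hstep : ∀ n : ℕ, per (T z₁) (T^[3*n] (T (T z₁))) (T^[3*n] (T (T (T z₁)))) ≤
      k * per z₁ (T^[3*n] (T z₁)) (T^[3*n] (T (T z₁))) + (1 - k) * D := by
    intro n
    have hmem := orbit hTA hTB hTC hk0 hk1 hcontr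
      hz₁ hTz1 hTz2 n
    have h := hcontr z₁ hz₁ _ hmem.2.1 _ hmem.2.2.1
    rw [hcomm n (T z₁), hcomm n (T (T z₁))] at h
    exact h
  have l1 : Tendsto (fun n => T^[3*n] (T z₁)) atTop (nhds z₂) := hconvB _ hTz1
  have l2 : Tendsto (fun n => T^[3*n] (T (T z₁))) atTop (nhds z₃) := hconvC _ hTz2
  have l3 : Tendsto (fun n => T^[3*n] (T (T (T z₁)))) atTop (nhds z₁) := hconvA _ hTz3
  have hLHS : Tendsto (fun n => per (T z₁) (T^[3*n] (T (T z₁))) (T^[3*n] (T (T (T z₁)))))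
      atTop (nhds (per (T z₁) z₃ z₁)) := by
    simp only [per]
    exact ((tendsto_const_nhds.sub l2).norm.add ((l2.sub l3).norm)).add
      ((l3.sub tendsto_const_nhds).norm)
  have hRHS : Tendsto (fun n => k * per z₁ (T^[3*n] (T z₁)) (T^[3*n] (T (T z₁))) + (1 - k) * D)
      atTop (nhds (k * per z₁ z₂ z₃ + (1 - k) * D)) := by
    simp only [per]
    exact ((((tendsto_const_nhds.sub l1).norm.add ((l1.sub l2).norm)).add
      ((l2.sub tendsto_const_nhds).norm)).const_mul k).add tendsto_const_nhds
  have hle := le_of_tendsto_of_tendsto' hLHS hRHS hstep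
  have hperz : per z₁ z₂ z₃ = D := by rw [per, h12, h23, h31]
  rw [hperz] at hle
  have hL : per (T z₁) z₃ z₁ ≤ D := by linarith
  have e1 : setDist B C ≤ ‖T z₁ - z₃‖ := setDist_le hTz1 hz₃
  have e2 : setDist A B ≤ ‖z₁ - T z₁‖ := setDist_le hz₁ hTz1
  have hTz3' : ‖T z₁ - z₃‖ ≤ setDist B C := by
    simp only [per] at hL
    rw [h31] at hL
    simp only [hD] at hL
    linarith
  have hsmall : ∀ ε : ℝ, 0 < ε → ‖T z₁ - z₂‖ ≤ ε := by
    intro ε hε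
    obtain ⟨γ, hγ0, hγ⟩ := uc_gamma B C hvB hε
    exact hγ (T z₁) hTz1 z₂ hz₂ z₃ hz₃ (by linarith) (by rw [h23]; linarith)
  by_contra hne
  have h0 : 0 < ‖T z₁ - z₂‖ := by
    rw [norm_pos_iff]
    exact sub_ne_zero_of_ne hne
  have := hsmall (‖T z₁ - z₂‖ / 2) (by positivity)
  linarith

end Tz


theorem stmt_19 {X : Type*} [NormedAddCommGroup X] [NormedSpace ℝ X]
    [UniformConvexSpace X] [CompleteSpace X]
    (A₁ A₂ A₃ : Set X) (h₁ : A₁.Nonempty) (h₂ : A₂.Nonempty) (h₃ : A₃.Nonempty)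
    (hc₁ : IsClosed A₁) (hc₂ : IsClosed A₂) (hc₃ : IsClosed A₃)
    (hv₁ : Convex ℝ A₁) (hv₂ : Convex ℝ A₂) (hv₃ : Convex ℝ A₃)
    (T : X → X)
    (hT₁ : ∀ x ∈ A₁, T x ∈ A₂) (hT₂ : ∀ x ∈ A₂, T x ∈ A₃) (hT₃ : ∀ x ∈ A₃, T x ∈ A₁)
    (k : ℝ) (hk0 : 0 < k) (hk1 : k < 1)
    (hcontr : ∀ x₁ ∈ A₁, ∀ x₂ ∈ A₂, ∀ x₃ ∈ A₃,
      ‖T x₁ - T x₂‖ + ‖T x₂ - T x₃‖ + ‖T x₃ - T x₁‖ ≤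
        k * (‖x₁ - x₂‖ + ‖x₂ - x₃‖ + ‖x₃ - x₁‖) +
        (1 - k) * (setDist A₁ A₂ + setDist A₂ A₃ + setDist A₃ A₁)) :
    ∃! z : X × X × X, z.1 ∈ A₁ ∧ z.2.1 ∈ A₂ ∧ z.2.2 ∈ A₃ ∧
      (∀ x ∈ A₁, Tendsto (fun n => T^[3 * n] x) atTop (nhds z.1)) ∧
      (∀ x ∈ A₂, Tendsto (fun n => T^[3 * n] x) atTop (nhds z.2.1)) ∧
      (∀ x ∈ A₃, Tendsto (fun n => T^[3 * n] x) atTop (nhds z.2.2)) ∧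
      ‖z.1 - z.2.1‖ = setDist A₁ A₂ ∧ ‖z.2.1 - z.2.2‖ = setDist A₂ A₃ ∧
      ‖z.2.2 - z.1‖ = setDist A₃ A₁ ∧
      T z.1 = z.2.1 ∧ T z.2.1 = z.2.2 ∧ T z.2.2 = z.1 := by
  -- perimeter form of the contraction and its rotations
  have pcontr₁ : ∀ x₁ ∈ A₁, ∀ x₂ ∈ A₂, ∀ x₃ ∈ A₃,
      per (T x₁) (T x₂) (T x₃) ≤ k * per x₁ x₂ x₃ +
        (1 - k) * (setDist A₁ A₂ + setDist A₂ A₃ + setDist A₃ A₁) := by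
    intro x₁ m₁ x₂ m₂ x₃ m₃
    simp only [per]
    exact hcontr x₁ m₁ x₂ m₂ x₃ m₃
  have pcontr₂ : ∀ x₁ ∈ A₂, ∀ x₂ ∈ A₃, ∀ x₃ ∈ A₁,
      per (T x₁) (T x₂) (T x₃) ≤ k * per x₁ x₂ x₃ +
        (1 - k) * (setDist A₂ A₃ + setDist A₃ A₁ + setDist A₁ A₂) := by
    intro x₁ m₁ x₂ m₂ x₃ m₃
    have h := pcontr₁ x₃ m₃ x₁ m₁ x₂ m₂
    rw [per_rot (T x₃), per_rot x₃] at h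
    linarith
  have pcontr₃ : ∀ x₁ ∈ A₃, ∀ x₂ ∈ A₁, ∀ x₃ ∈ A₂,
      per (T x₁) (T x₂) (T x₃) ≤ k * per x₁ x₂ x₃ +
        (1 - k) * (setDist A₃ A₁ + setDist A₁ A₂ + setDist A₂ A₃) := by
    intro x₁ m₁ x₂ m₂ x₃ m₃
    have h := pcontr₁ x₂ m₂ x₃ m₃ x₁ m₁
    rw [← per_rot (T x₁), ← per_rot x₁] at h
    linarith
  obtain ⟨z₁, hz₁A, hconv₁⟩ := master hc₁ hv₁ hT₁ hT₂ hT₃ hk0 hk1 pcontr₁ h₁.choose_spec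
  obtain ⟨z₂, hz₂A, hconv₂⟩ := master hc₂ hv₂ hT₂ hT₃ hT₁ hk0 hk1 pcontr₂ h₂.choose_spec
  obtain ⟨z₃, hz₃A, hconv₃⟩ := master hc₃ hv₃ hT₃ hT₁ hT₂ hk0 hk1 pcontr₃ h₃.choose_spec
  -- distances between the limit points
  set x₀ := h₁.choose with hx₀def
  have hx₀ : x₀ ∈ A₁ := h₁.choose_spec
  have hx1 : T x₀ ∈ A₂ := hT₁ _ hx₀
  have hx2 : T (T x₀) ∈ A₃ := hT₂ _ hx1
  have ha : Tendsto (fun n => T^[3*n] x₀) atTop (nhds z₁) := hconv₁ x₀ hx₀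
  have hb : Tendsto (fun n => T^[3*n] (T x₀)) atTop (nhds z₂) := hconv₂ _ hx1
  have hc : Tendsto (fun n => T^[3*n] (T (T x₀))) atTop (nhds z₃) := hconv₃ _ hx2
  have hk3t : Tendsto (fun n : ℕ => k ^ (3*n)) atTop (nhds 0) := by
    have h2 : Tendsto (fun n : ℕ => (k^3) ^ n) atTop (nhds 0) :=
      tendsto_pow_atTop_nhds_zero_of_lt_one (pow_nonneg hk0.le 3)
        (pow_lt_one₀ hk0.le hk1 (by norm_num))
    convert h2 using 2 with n
    rw [← pow_mul]
  set E : ℝ := per x₀ (T x₀) (T (T x₀)) -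
    (setDist A₁ A₂ + setDist A₂ A₃ + setDist A₃ A₁) with hEdef
  have horb := fun n => orbit hT₁ hT₂ hT₃ hk0 hk1 pcontr₁ hx₀ hx1 hx2 n
  have htE : ∀ d : ℝ, Tendsto (fun n : ℕ => d + k^(3*n) * E) atTop (nhds d) := by
    intro d
    have h0 : Tendsto (fun n : ℕ => k^(3*n) * E) atTop (nhds 0) := by
      simpa using hk3t.mul_const E
    have := (tendsto_const_nhds (x := d) (f := atTop (α := ℕ))).add h0
    simpa using this
  have h12 : ‖z₁ - z₂‖ = setDist A₁ A₂ := by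
    refine le_antisymm ?_ (setDist_le hz₁A hz₂A)
    refine le_of_tendsto_of_tendsto' ((ha.sub hb).norm) (htE (setDist A₁ A₂)) fun n => ?_
    obtain ⟨ma, mb, mc, hp⟩ := horb n
    have e2 := setDist_le mb mc
    have e3 := setDist_le mc ma
    simp only [per] at hp
    simp only [hEdef, per]
    linarith
  have h23 : ‖z₂ - z₃‖ = setDist A₂ A₃ := by
    refine le_antisymm ?_ (setDist_le hz₂A hz₃A)
    refine le_of_tendsto_of_tendsto' ((hb.sub hc).norm) (htE (setDist A₂ A₃)) fun n => ?_
    obtain ⟨ma, mb, mc, hp⟩ := horb n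
    have e2 := setDist_le ma mb
    have e3 := setDist_le mc ma
    simp only [per] at hp
    simp only [hEdef, per]
    linarith
  have h31 : ‖z₃ - z₁‖ = setDist A₃ A₁ := by
    refine le_antisymm ?_ (setDist_le hz₃A hz₁A)
    refine le_of_tendsto_of_tendsto' ((hc.sub ha).norm) (htE (setDist A₃ A₁)) fun n => ?_
    obtain ⟨ma, mb, mc, hp⟩ := horb n
    have e2 := setDist_le ma mb
    have e3 := setDist_le mb mc
    simp only [per] at hp
    simp only [hEdef, per]
    linarith
  -- the T-equalities
  have tz₁ : T z₁ = z₂ := tz hv₂ hT₁ hT₂ hT₃ hk0 hk1 pcontr₁ hz₁A hz₂A hz₃A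
    hconv₁ hconv₂ hconv₃ h12 h23 h31
  have tz₂ : T z₂ = z₃ := tz hv₃ hT₂ hT₃ hT₁ hk0 hk1 pcontr₂ hz₂A hz₃A hz₁A
    hconv₂ hconv₃ hconv₁ h23 h31 h12
  have tz₃ : T z₃ = z₁ := tz hv₁ hT₃ hT₁ hT₂ hk0 hk1 pcontr₃ hz₃A hz₁A hz₂A
    hconv₃ hconv₁ hconv₂ h31 h12 h23
  refine ⟨(z₁, z₂, z₃), ⟨hz₁A, hz₂A, hz₃A, hconv₁, hconv₂, hconv₃, h12, h23, h31,
    tz₁, tz₂, tz₃⟩, ?_⟩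
  rintro ⟨a, b, c⟩ ⟨haA, hbB, hcC, hca, hcb, hcc, -, -, -, hTa, hTb, hTc⟩
  have hfix : ∀ w : X, T (T (T w)) = w → ∀ n : ℕ, T^[3*n] w = w := by
    intro w hw n
    induction n with
    | zero => simp
    | succ n ih =>
      have e : 3*(n+1) = 3*n + 3 := by ring
      rw [e, Function.iterate_add_apply]
      have e3 : T^[3] w = w := by
        have : T^[3] w = T (T (T w)) := by simp [Function.iterate_succ_apply]
        rw [this, hw]
      rw [e3, ih]
  have h3a : T (T (T a)) = a := by rw [hTa, hTb, hTc]
  have h3b : T (T (T b)) = b := by rw [hTb, hTc, hTa]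
  have h3c : T (T (T c)) = c := by rw [hTc, hTa, hTb]
  have ea : a = z₁ := by
    refine tendsto_nhds_unique (f := fun n : ℕ => T^[3*n] a) (l := atTop) ?_ (hconv₁ a haA)
    have : (fun n : ℕ => T^[3*n] a) = fun _ => a := funext (hfix a h3a)
    rw [this]
    exact tendsto_const_nhds
  have eb : b = z₂ := by
    refine tendsto_nhds_unique (f := fun n : ℕ => T^[3*n] b) (l := atTop) ?_ (hconv₂ b hbB)
    have : (fun n : ℕ => T^[3*n] b) = fun _ => b := funext (hfix b h3b)
    rw [this]
    exact tendsto_const_nhds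
  have ec : c = z₃ := by
    refine tendsto_nhds_unique (f := fun n : ℕ => T^[3*n] c) (l := atTop) ?_ (hconv₃ c hcC)
    have : (fun n : ℕ => T^[3*n] c) = fun _ => c := funext (hfix c h3c)
    rw [this]
    exact tendsto_const_nhds
  rw [ea, eb, ec]
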